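/- Let d ∈ (Z_{>0})^n, F ∈ K[x]^{m×n} with column degrees < d, s ∈ Z^m a shift, and P ∈ K[x]^{m×m}. Then P is an s-minimal basis of A_d(F) if and only if the following four conditions hold: (i) P is s-reduced; (ii) det(P) is a nonzero monomial; (iii) P·F ≡ 0 mod diag(x^{d_1},...,x^{d_n}); (iv) the constant matrix [P(0) C] ∈ K^{m×(m+n)} has rank m, where C is the constant coefficient of P·F·diag(x^{−d_1},...,x^{−d_n}). -/

import Mathlib

/-!
Once every row of `P` is an approximant, the coefficient of degree `d_j` of `(q P F)_j` only
depends on `q(0)`: it is `(q(0) C)_j`. Hence `q P = x r` with `r ∈ A_d(F)` exactly when `q(0)`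
lies in the left kernel of `[P(0) C]`. If that kernel is trivial and `det P = c x^δ`, then for an
approximant `p` the vector `q = c⁻¹ p adj(P)` satisfies `q P = x^δ p`, and the criterion lets us
divide `q` by `x` one step at a time until `p` itself is a combination of the rows. Conversely,
if the rows form a basis, a constant `v` in the left kernel gives `v P = x u P`, so `v = x u` and
`v = 0`; and since `x^D I` has approximant rows for `D = max d_j`, `det P` divides `x^(D m)`.
-/

open Polynomial Matrix

noncomputable section

def approxModule {m n : ℕ} {K : Type*} [Field K] (d : Fin n → ℕ)
    (F : Matrix (Fin m) (Fin n) K[X]) : Submodule K[X] (Fin m → K[X]) where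
  carrier := {p | ∀ j, (X : K[X]) ^ d j ∣ Matrix.vecMul p F j}
  zero_mem' := by intro j; simp [Matrix.zero_vecMul]
  add_mem' := by
    intro a b ha hb j
    rw [Matrix.add_vecMul, Pi.add_apply]
    exact dvd_add (ha j) (hb j)
  smul_mem' := by
    intro c p hp j
    rw [Matrix.smul_vecMul, Pi.smul_apply, smul_eq_mul]
    exact (hp j).mul_left c

def rowsBasis {κ ι : Type*} {K : Type*} [Field K] (B : Matrix κ ι K[X])
    (N : Submodule K[X] (ι → K[X])) : Prop :=
  LinearIndependent K[X] (fun i => B i) ∧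
    Submodule.span K[X] (Set.range fun i => B i) = N

def sRowDeg {m : ℕ} {K : Type*} [Field K] (s : Fin m → ℤ)
    (P : Matrix (Fin m) (Fin m) K[X]) (i : Fin m) : WithBot ℤ :=
  Finset.univ.sup fun j => WithBot.map (fun k : ℕ => (k : ℤ) + s j) (P i j).degree

def sLeadingMatrix {m : ℕ} {K : Type*} [Field K] (s : Fin m → ℤ)
    (P : Matrix (Fin m) (Fin m) K[X]) : Matrix (Fin m) (Fin m) K :=
  Matrix.of fun i j =>
    WithBot.recBotCoe 0
      (fun r => if 0 ≤ r - s j then (P i j).coeff (r - s j).toNat else 0)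
      (sRowDeg s P i)

/-- `P` is `s`-reduced when its `s`-leading matrix is invertible. -/
def sReduced {m : ℕ} {K : Type*} [Field K] (s : Fin m → ℤ)
    (P : Matrix (Fin m) (Fin m) K[X]) : Prop :=
  IsUnit (sLeadingMatrix s P).det

namespace Matrix

theorem rank_eq_card_iff_vecMul_eq_zero {K ι κ : Type*} [Field K] [Fintype ι] [Fintype κ]
    (A : Matrix ι κ K) : A.rank = Fintype.card ι ↔ ∀ v, v ᵥ* A = 0 → v = 0 := by
  rw [rank_eq_finrank_span_row, ← Set.finrank, eq_comm,
    ← linearIndependent_iff_card_eq_finrank_span, ← vecMul_injective_iff,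
    ← coe_vecMulLinear, injective_iff_map_eq_zero]
  rfl

theorem rank_eq_iff_vecMul_eq_zero {K κ : Type*} [Field K] [Fintype κ] {m : ℕ}
    (A : Matrix (Fin m) κ K) : A.rank = m ↔ ∀ v, v ᵥ* A = 0 → v = 0 := by
  simpa only [Fintype.card_fin] using A.rank_eq_card_iff_vecMul_eq_zero

theorem mem_span_rows_iff {R ι κ : Type*} [CommSemiring R] [Fintype ι] (P : Matrix ι κ R)
    (p : κ → R) : p ∈ Submodule.span R (Set.range fun i => P i) ↔ ∃ q, q ᵥ* P = p := by
  change p ∈ Submodule.span R (Set.range P.row) ↔ _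
  rw [← range_vecMulLinear]
  rfl

end Matrix

namespace Polynomial

section CommSemiring

variable {R : Type*} [CommSemiring R]

theorem X_pow_succ_dvd_iff_coeff_eq_zero {p : R[X]} {k : ℕ} (h : X ^ k ∣ p) :
    X ^ (k + 1) ∣ p ↔ p.coeff k = 0 := by
  simp only [X_pow_dvd_iff, Nat.lt_succ_iff_lt_or_eq, or_imp, forall_and, forall_eq] at h ⊢
  exact and_iff_right h

theorem coeff_mul_of_X_pow_dvd {q f : R[X]} {k : ℕ} (h : X ^ k ∣ f) :
    (q * f).coeff k = q.coeff 0 * f.coeff k := by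
  obtain ⟨g, rfl⟩ := h
  rw [mul_left_comm, coeff_X_pow_mul', coeff_X_pow_mul', if_pos le_rfl, if_pos le_rfl,
    Nat.sub_self, mul_coeff_zero]

theorem exists_eq_X_smul_iff {ι : Type*} (v : ι → R[X]) :
    (∃ r : ι → R[X], v = (X : R[X]) • r) ↔ ∀ i, (v i).eval 0 = 0 := by
  simp only [← coeff_zero_eq_eval_zero, ← X_dvd_iff, funext_iff, Pi.smul_apply, smul_eq_mul]
  exact (Classical.skolem (p := fun i c => v i = X * c)).symm

variable {ι κ : Type*} [Fintype ι]

def columnCoeff (d : κ → ℕ) (G : Matrix ι κ R[X]) : Matrix ι κ R :=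
  of fun i j => (G i j).coeff (d j)

theorem eval_zero_vecMul (q : ι → R[X]) (P : Matrix ι κ R[X]) (j : κ) :
    ((q ᵥ* P) j).eval 0 = ((fun i => (q i).eval 0) ᵥ* P.map (eval 0)) j := by
  simpa only [coe_evalRingHom, Function.comp_def] using RingHom.map_vecMul (evalRingHom 0) P q j

variable {d : κ → ℕ} {G : Matrix ι κ R[X]} (hG : ∀ i j, (X : R[X]) ^ d j ∣ G i j)
include hG

theorem X_pow_dvd_vecMul (q : ι → R[X]) (j : κ) : (X : R[X]) ^ d j ∣ (q ᵥ* G) j :=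
  Finset.dvd_sum fun i _ => (hG i j).mul_left (q i)

theorem coeff_vecMul_eq_vecMul_columnCoeff (q : ι → R[X]) (j : κ) :
    ((q ᵥ* G) j).coeff (d j) = ((fun i => (q i).eval 0) ᵥ* columnCoeff d G) j := by
  simp only [vecMul, dotProduct, finsetSum_coeff, coeff_mul_of_X_pow_dvd (hG _ j),
    coeff_zero_eq_eval_zero, columnCoeff, of_apply]

end CommSemiring

theorem exists_eq_C_mul_X_pow_of_dvd_X_pow {K : Type*} [Field K] {p : K[X]} {N : ℕ}
    (h : p ∣ X ^ N) : ∃ c : K, c ≠ 0 ∧ ∃ δ : ℕ, p = C c * X ^ δ := by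
  obtain ⟨δ, -, u, hu⟩ := (dvd_prime_pow prime_X N).mp h
  obtain ⟨c, hc, hCc⟩ := isUnit_iff.mp (u⁻¹).isUnit
  refine ⟨c, hc.ne_zero, δ, ?_⟩
  rw [hCc, ← hu, mul_comm, Units.mul_inv_cancel_right]

end Polynomial

section Approximants

variable {K : Type*} [Field K] {m n : ℕ}

theorem X_pow_smul_mem_approxModule {d : Fin n → ℕ} {D : ℕ} (hD : ∀ j, d j ≤ D)
    (F : Matrix (Fin m) (Fin n) K[X]) (p : Fin m → K[X]) :
    (X : K[X]) ^ D • p ∈ approxModule d F := fun j => by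
  rw [smul_vecMul, Pi.smul_apply, smul_eq_mul]
  exact (pow_dvd_pow X (hD j)).mul_right _

variable {d : Fin n → ℕ} {F : Matrix (Fin m) (Fin n) K[X]} {P : Matrix (Fin m) (Fin m) K[X]}

theorem span_rows_le_approxModule_iff :
    Submodule.span K[X] (Set.range fun i => P i) ≤ approxModule d F ↔
      ∀ i j, (X : K[X]) ^ d j ∣ (P * F) i j := by
  simp only [Submodule.span_le, Set.range_subset_iff, mul_apply_eq_vecMul]
  rfl

theorem exists_mem_approxModule_vecMul_eq_X_smul_iff
    (hPF : ∀ i j, (X : K[X]) ^ d j ∣ (P * F) i j) (q : Fin m → K[X]) :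
    (∃ r ∈ approxModule d F, q ᵥ* P = (X : K[X]) • r) ↔
      (fun i => (q i).eval 0) ᵥ* fromCols (P.map (eval 0)) (columnCoeff d (P * F)) = 0 := by
  have hqPF : ∀ j, (X : K[X]) ^ d j ∣ (q ᵥ* P ᵥ* F) j := by
    simpa only [vecMul_vecMul] using X_pow_dvd_vecMul hPF q
  rw [vecMul_fromCols, ← Sum.elim_zero_zero, Sum.elim_eq_iff, funext_iff, funext_iff]
  simp only [← eval_zero_vecMul, ← coeff_vecMul_eq_vecMul_columnCoeff hPF, Pi.zero_apply,
    ← exists_eq_X_smul_iff, ← vecMul_vecMul]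
  constructor
  · rintro ⟨r, hr, hqr⟩
    refine ⟨⟨r, hqr⟩, fun j => ?_⟩
    rw [← X_pow_succ_dvd_iff_coeff_eq_zero (hqPF j), hqr, smul_vecMul, Pi.smul_apply,
      smul_eq_mul, pow_succ']
    exact mul_dvd_mul_left X (hr j)
  · rintro ⟨⟨r, hqr⟩, hres⟩
    refine ⟨r, fun j => ?_, hqr⟩
    have := (X_pow_succ_dvd_iff_coeff_eq_zero (hqPF j)).mpr (hres j)
    rwa [hqr, smul_vecMul, Pi.smul_apply, smul_eq_mul, pow_succ',
      mul_dvd_mul_iff_left X_ne_zero] at this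

section

variable (hPF : ∀ i j, (X : K[X]) ^ d j ∣ (P * F) i j)
include hPF

theorem exists_vecMul_eq_of_vecMul_eq_X_pow_smul
    (hrank : (fromCols (P.map (eval 0)) (columnCoeff d (P * F))).rank = m)
    {p : Fin m → K[X]} (hp : p ∈ approxModule d F) (k : ℕ) (q : Fin m → K[X])
    (hq : q ᵥ* P = (X : K[X]) ^ k • p) : ∃ q', q' ᵥ* P = p := by
  induction k generalizing q with
  | zero => exact ⟨q, by rwa [pow_zero, one_smul] at hq⟩
  | succ k ih =>
    have hq0 : (fun i => (q i).eval 0) = 0 := by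
      refine (rank_eq_iff_vecMul_eq_zero _).mp hrank _
        ((exists_mem_approxModule_vecMul_eq_X_smul_iff hPF q).mp ?_)
      exact ⟨X ^ k • p, Submodule.smul_mem _ _ hp, by rw [hq, pow_succ', mul_smul]⟩
    obtain ⟨q', rfl⟩ := (exists_eq_X_smul_iff q).mpr (congrFun hq0)
    refine ih q' (smul_right_injective _ (X_ne_zero (R := K)) ?_)
    change X • (q' ᵥ* P) = X • (X ^ k • p)
    rw [← smul_vecMul, hq, pow_succ', mul_smul]

theorem span_rows_eq_approxModule
    (hdet : ∃ c : K, c ≠ 0 ∧ ∃ δ : ℕ, P.det = C c * X ^ δ)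
    (hrank : (fromCols (P.map (eval 0)) (columnCoeff d (P * F))).rank = m) :
    Submodule.span K[X] (Set.range fun i => P i) = approxModule d F := by
  obtain ⟨c, hc, δ, hPdet⟩ := hdet
  refine le_antisymm (span_rows_le_approxModule_iff.mpr hPF) fun p hp => ?_
  rw [mem_span_rows_iff]
  refine exists_vecMul_eq_of_vecMul_eq_X_pow_smul hPF hrank hp δ
    (C c⁻¹ • (p ᵥ* P.adjugate)) ?_
  rw [smul_vecMul, vecMul_vecMul, adjugate_mul, hPdet, vecMul_smul,
    vecMul_one, smul_smul, ← mul_assoc, ← C_mul, inv_mul_cancel₀ hc, C_1, one_mul]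

end

theorem det_eq_C_mul_X_pow_of_span_rows_eq
    (hspan : Submodule.span K[X] (Set.range fun i => P i) = approxModule d F) :
    ∃ c : K, c ≠ 0 ∧ ∃ δ : ℕ, P.det = C c * X ^ δ := by
  set D := Finset.univ.sup d
  have hrow (i : Fin m) :
      ∃ q, q ᵥ* P = ((X : K[X]) ^ D • (1 : Matrix (Fin m) (Fin m) K[X])) i :=
    (mem_span_rows_iff P _).mp <| hspan ▸
      X_pow_smul_mem_approxModule (fun j => Finset.le_sup (Finset.mem_univ j)) F _
  choose Q hQ using hrow
  have hQP : of Q * P = (X : K[X]) ^ D • 1 :=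
    funext fun i => by rw [mul_apply_eq_vecMul]; exact hQ i
  have hdvd : P.det ∣ X ^ (D * m) := Dvd.intro_left (of Q).det <| by
    rw [← det_mul, hQP, det_smul, det_one, mul_one, Fintype.card_fin, pow_mul]
  exact exists_eq_C_mul_X_pow_of_dvd_X_pow hdvd

theorem rank_fromCols_eq_of_rowsBasis (hB : rowsBasis P (approxModule d F)) :
    (fromCols (P.map (eval 0)) (columnCoeff d (P * F))).rank = m := by
  obtain ⟨hli, hspan⟩ := hB
  have hPF := span_rows_le_approxModule_iff.mp hspan.le
  refine (rank_eq_iff_vecMul_eq_zero _).mpr fun v hv => ?_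
  set q : Fin m → K[X] := fun i => C (v i)
  obtain ⟨r, hr, hqr⟩ := (exists_mem_approxModule_vecMul_eq_X_smul_iff hPF q).mpr <| by
    simpa only [q, eval_C] using hv
  obtain ⟨u, rfl⟩ := (mem_span_rows_iff P r).mp (hspan ▸ hr)
  have hqu : q = (X : K[X]) • u :=
    vecMul_injective_iff.mpr hli <| show q ᵥ* P = (X • u) ᵥ* P by
      rw [hqr, smul_vecMul]
  funext i
  simpa [q] using congrArg (coeff · 0) (congrFun hqu i)

theorem rowsBasis_approxModule_iff : rowsBasis P (approxModule d F) ↔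
    (∃ c : K, c ≠ 0 ∧ ∃ δ : ℕ, P.det = C c * X ^ δ) ∧
      (∀ i j, (X : K[X]) ^ d j ∣ (P * F) i j) ∧
      (fromCols (P.map (eval 0)) (columnCoeff d (P * F))).rank = m := by
  constructor
  · intro hB
    exact ⟨det_eq_C_mul_X_pow_of_span_rows_eq hB.2,
      span_rows_le_approxModule_iff.mp hB.2.le,
      rank_fromCols_eq_of_rowsBasis hB⟩
  · rintro ⟨hdet, hPF, hrank⟩
    refine ⟨linearIndependent_rows_of_det_ne_zero ?_, span_rows_eq_approxModule hPF hdet hrank⟩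
    obtain ⟨c, hc, δ, hPdet⟩ := hdet
    rw [hPdet]
    exact mul_ne_zero (C_ne_zero.mpr hc) (pow_ne_zero _ X_ne_zero)

end Approximants

theorem sMinimal_basis_characterization_general
    {K : Type*} [Field K] {m n : ℕ} (d : Fin n → ℕ)
    (F : Matrix (Fin m) (Fin n) K[X])
    (s : Fin m → ℤ) (P : Matrix (Fin m) (Fin m) K[X]) :
    (rowsBasis P (approxModule d F) ∧ sReduced s P) ↔
      (sReduced s P ∧
       (∃ c : K, c ≠ 0 ∧ ∃ δ : ℕ, P.det = Polynomial.C c * X ^ δ) ∧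
       (∀ i j, (X : K[X]) ^ d j ∣ (P * F) i j) ∧
       (Matrix.fromCols (P.map (Polynomial.eval 0))
          (Matrix.of fun i j => ((P * F) i j).coeff (d j))).rank = m) := by
  rw [and_comm]
  exact and_congr_right fun _ => rowsBasis_approxModule_iff

/-- Characterization of `s`-minimal approximant bases. -/
theorem sMinimal_basis_characterization
    {K : Type*} [Field K] {m n : ℕ} (d : Fin n → ℕ) (hd : ∀ j, 0 < d j)
    (F : Matrix (Fin m) (Fin n) K[X])
    (hF : ∀ i j, (F i j).degree < (d j : ℕ∞))
    (s : Fin m → ℤ) (P : Matrix (Fin m) (Fin m) K[X]) :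
    (rowsBasis P (approxModule d F) ∧ sReduced s P) ↔
      (sReduced s P ∧
       (∃ c : K, c ≠ 0 ∧ ∃ δ : ℕ, P.det = Polynomial.C c * X ^ δ) ∧
       (∀ i j, (X : K[X]) ^ d j ∣ (P * F) i j) ∧
       (Matrix.fromCols (P.map (Polynomial.eval 0))
          (Matrix.of fun i j => ((P * F) i j).coeff (d j))).rank = m) :=
  sMinimal_basis_characterization_general d F s P
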